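/- On the Lie algebra r₃ (brackets [e₁,e₂]=e₂, [e₁,e₃]=e₂+e₃), consider the Lie affgebra bracket {x,y} = [x,y] + β₁η₁e₁ + (β₁ξ₂ + β₄(η₂-ξ₂))e₂ + (β₁ξ₃ + β₄(η₃-ξ₃))e₃ + s for x = Σξᵢeᵢ, y = Σηᵢeᵢ, s = N₁e₁+N₂e₂+N₃e₃, denoted F(β₁,β₄,N₁,N₂,N₃). Then F(β₁,β₄,N₁,N₂,N₃) and F(β₁',β₄',N₁',N₂',N₃') are isomorphic Lie affgebras if and only if β₁'=β₁, β₄'=β₄, N₁'=N₁, and there exist α₁,α₂,α₃ ∈ ℂ, α₄ ∈ ℂ* with N₂' = α₁(N₁-(β₁-β₄)(1-β₁)) - α₂(β₄-β₁)(1-β₁) + α₄N₂ + α₃N₃ and N₃' = α₂(N₁-(β₁-β₄)(1-β₁)) + α₄N₃. -/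

import Mathlib

/-!
For a bracket `{x, y} = ⁅x, y⁆ + g x + f (y - x) + s` the second difference
`{x, y} - {x, 0} - {0, y} + {0, 0}` is the Lie bracket, so the linear part `T` of an isomorphism
`v ↦ T v + c` is a Lie algebra automorphism, and the remaining terms give `T g = g' T`,
`T f = (f' + ad c) T` and `T s + c = g' c + s'`.
An automorphism of `r₃` preserves the derived algebra `span (e₂, e₃)`, on which `ad e₁` acts by a
unipotent Jordan block; comparing eigenvalues gives `T e₁ ∈ e₁ + span (e₂, e₃)`, and then `T`
commutes with the block: `T e₂ = α₄ e₂`, `T e₃ = α₃ e₂ + α₄ e₃`. With `g = β₁` and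
`f = diag (β₁, β₄, β₄)` the equation for `f` forces `β₄' = β₄` and determines `c`, and the
equation for `s` gives `N'`.
-/

variable {L : Type*} [LieRing L] [LieAlgebra ℂ L]

/-- The affine Lie bracket of the Lie affgebra `F(β₁,β₄,N₁,N₂,N₃)` on `r₃`,
expressed in the basis `b = (e₁,e₂,e₃)`:
`{x,y} = [x,y] + β₁η₁e₁ + (β₁ξ₂+β₄(η₂-ξ₂))e₂ + (β₁ξ₃+β₄(η₃-ξ₃))e₃ + s`,
`s = N₁e₁+N₂e₂+N₃e₃`. -/
noncomputable def affBracketF (b : Module.Basis (Fin 3) ℂ L) (β₁ β₄ N₁ N₂ N₃ : ℂ)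
    (x y : L) : L :=
  ⁅x, y⁆ + (β₁ * b.repr y 0 + N₁) • b 0
    + (β₁ * b.repr x 1 + β₄ * (b.repr y 1 - b.repr x 1) + N₂) • b 1
    + (β₁ * b.repr x 2 + β₄ * (b.repr y 2 - b.repr x 2) + N₃) • b 2

/-- An isomorphism of Lie affgebras on `L` (with the affine structure
`⟨a,b,c⟩ = a - b + c`): a bijective affine map intertwining the brackets. -/
def IsLieAffgebraIso (br br' : L → L → L) : Prop :=
  ∃ (T : L ≃ₗ[ℂ] L) (c : L), ∀ x y : L, T (br x y) + c = br' (T x + c) (T y + c)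

theorem LinearEquiv.comp_smul_id_eq_smul_id_comp_iff {K M : Type*} [Field K] [AddCommGroup M]
    [Module K M] [Nontrivial M] (T : M ≃ₗ[K] M) (a a' : K) :
    (T : M →ₗ[K] M) ∘ₗ (a • LinearMap.id) = (a' • LinearMap.id) ∘ₗ T ↔ a = a' := by
  rw [LinearMap.comp_smul, LinearMap.smul_comp, LinearMap.comp_id, LinearMap.id_comp]
  refine smul_left_inj fun h => ?_
  obtain ⟨x, hx⟩ := exists_ne (0 : M)
  exact T.map_ne_zero_iff.2 hx (LinearMap.congr_fun h x)

theorem Matrix.toLin_diagonal_self {R M ι : Type*} [CommRing R] [AddCommGroup M] [Module R M]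
    [Fintype ι] [DecidableEq ι] (b : Module.Basis ι R M) (d : ι → R) (i : ι) :
    Matrix.toLin b b (Matrix.diagonal d) (b i) = d i • b i := by
  simp [Matrix.toLin_self, Matrix.diagonal_apply, ite_smul]

theorem Module.Basis.smul_add_smul_add_smul_eq_iff {R M : Type*} [CommRing R] [AddCommGroup M]
    [Module R M] (b : Module.Basis (Fin 3) R M) {u₀ u₁ u₂ v₀ v₁ v₂ : R} :
    u₀ • b 0 + u₁ • b 1 + u₂ • b 2 = v₀ • b 0 + v₁ • b 1 + v₂ • b 2 ↔
      u₀ = v₀ ∧ u₁ = v₁ ∧ u₂ = v₂ := by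
  simp [b.ext_elem_iff, Fin.forall_fin_succ, Finsupp.single_apply]

/-- The bracket of the Lie affgebra `X(G; g, f, s)`. -/
def lieAffBracket (g f : L →ₗ[ℂ] L) (s x y : L) : L := ⁅x, y⁆ + g x + f (y - x) + s

theorem isLieAffgebraIso_lieAffBracket_iff (g f g' f' : L →ₗ[ℂ] L) (s s' : L) :
    IsLieAffgebraIso (lieAffBracket g f s) (lieAffBracket g' f' s') ↔
      ∃ (T : L ≃ₗ⁅ℂ⁆ L) (c : L), (T : L →ₗ[ℂ] L) ∘ₗ g = g' ∘ₗ T ∧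
        (T : L →ₗ[ℂ] L) ∘ₗ f = (f' + LieAlgebra.ad ℂ L c) ∘ₗ T ∧ T s + c = g' c + s' := by
  constructor
  · rintro ⟨T, c, H⟩
    have H' (x y : L) : T ⁅x, y⁆ + T (g x) + T (f y) - T (f x) + T s + c
        = ⁅T x, T y⁆ + ⁅T x, c⁆ + ⁅c, T y⁆ + g' (T x) + g' c + f' (T y) - f' (T x) + s' := by
      have h := H x y
      simp only [lieAffBracket, map_add, map_sub, add_sub_add_right_eq_sub, lie_add, add_lie,
        lie_self] at h
      linear_combination (norm := module) h
    have hs : T s + c = g' c + s' := by simpa using H' 0 0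
    have hf (y : L) : T (f y) = f' (T y) + ⁅c, T y⁆ := by
      have h := H' 0 y
      simp only [zero_lie, map_zero, add_zero, zero_add, sub_zero] at h
      linear_combination (norm := module) h - hs
    have hg (x : L) : T (g x) = g' (T x) := by
      have h := H' x 0
      simp only [lie_zero, map_zero, add_zero] at h
      linear_combination (norm := module) h - hs + hf x - lie_skew c (T x)
    have hlie (x y : L) : T ⁅x, y⁆ = ⁅T x, T y⁆ := by
      linear_combination (norm := module) H' x y - hs - hg x - hf y + hf x - lie_skew c (T x)
    refine ⟨{ T with map_lie' := hlie _ _ }, c, ?_, ?_, hs⟩ <;> ext x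
    · exact hg x
    · exact hf x
  · rintro ⟨T, c, hg, hf, hs⟩
    refine ⟨T.toLinearEquiv, c, fun x y => ?_⟩
    have hg' := LinearMap.congr_fun hg x
    have hf' := LinearMap.congr_fun hf (y - x)
    simp only [LinearMap.comp_apply, LinearMap.add_apply, LieAlgebra.ad_apply,
      LinearEquiv.coe_coe, LieEquiv.coe_toLinearEquiv, map_sub] at hg' hf'
    simp only [lieAffBracket, map_add, map_sub, add_sub_add_right_eq_sub, lie_add, add_lie,
      lie_self, LieEquiv.coe_toLinearEquiv, LieEquiv.map_lie]
    linear_combination (norm := module) hg' + hf' + hs + lie_skew c (T x)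

theorem map_add_eq_smul_add_iff {R M : Type*} [CommRing R] [AddCommGroup M] [Module R M]
    {b : Module.Basis (Fin 3) R M} {T : M →ₗ[R] M} {α₁ α₂ α₃ α₄ : R}
    (hT0 : T (b 0) = b 0 + α₁ • b 1 + α₂ • b 2) (hT1 : T (b 1) = α₄ • b 1)
    (hT2 : T (b 2) = α₃ • b 1 + α₄ • b 2) (β₁ β₄ N₁ N₂ N₃ N₁' N₂' N₃' : R) :
    T (N₁ • b 0 + N₂ • b 1 + N₃ • b 2) + (((β₄ - β₁) * (α₁ - α₂)) • b 1 + ((β₄ - β₁) * α₂) • b 2)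
        = β₁ • (((β₄ - β₁) * (α₁ - α₂)) • b 1 + ((β₄ - β₁) * α₂) • b 2)
          + (N₁' • b 0 + N₂' • b 1 + N₃' • b 2) ↔
      N₁' = N₁ ∧
        N₂' = α₁ * (N₁ - (β₁ - β₄) * (1 - β₁)) - α₂ * (β₄ - β₁) * (1 - β₁)
          + α₄ * N₂ + α₃ * N₃ ∧
        N₃' = α₂ * (N₁ - (β₁ - β₄) * (1 - β₁)) + α₄ * N₃ := by
  set c := ((β₄ - β₁) * (α₁ - α₂)) • b 1 + ((β₄ - β₁) * α₂) • b 2 with hc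
  have hs : T (N₁ • b 0 + N₂ • b 1 + N₃ • b 2) + (1 - β₁) • c
      = N₁ • b 0 + (α₁ * (N₁ - (β₁ - β₄) * (1 - β₁)) - α₂ * (β₄ - β₁) * (1 - β₁)
          + α₄ * N₂ + α₃ * N₃) • b 1 + (α₂ * (N₁ - (β₁ - β₄) * (1 - β₁)) + α₄ * N₃) • b 2 := by
    simp only [hc, map_add, map_smul, hT0, hT1, hT2]
    module
  rw [← b.smul_add_smul_add_smul_eq_iff, ← hs]
  constructor <;> intro h <;> linear_combination (norm := module) -h

structure IsR3Basis {R M : Type*} [CommRing R] [LieRing M] [LieAlgebra R M]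
    (b : Module.Basis (Fin 3) R M) : Prop where
  lie_zero_one : ⁅b 0, b 1⁆ = b 1
  lie_zero_two : ⁅b 0, b 2⁆ = b 1 + b 2
  lie_one_two : ⁅b 1, b 2⁆ = 0

namespace IsR3Basis

section CommRing

variable {R M : Type*} [CommRing R] [LieRing M] [LieAlgebra R M] {b : Module.Basis (Fin 3) R M}

theorem lie_one_zero (hb : IsR3Basis b) : ⁅b 1, b 0⁆ = -b 1 := by
  rw [← lie_skew, hb.lie_zero_one]

theorem lie_two_zero (hb : IsR3Basis b) : ⁅b 2, b 0⁆ = -(b 1 + b 2) := by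
  rw [← lie_skew, hb.lie_zero_two]

theorem lie_two_one (hb : IsR3Basis b) : ⁅b 2, b 1⁆ = 0 := by
  rw [← lie_skew, hb.lie_one_two, neg_zero]

theorem lie_eq (hb : IsR3Basis b) (x y : M) :
    ⁅x, y⁆ = (b.repr x 0 * b.repr y 1 - b.repr x 1 * b.repr y 0
        + b.repr x 0 * b.repr y 2 - b.repr x 2 * b.repr y 0) • b 1
      + (b.repr x 0 * b.repr y 2 - b.repr x 2 * b.repr y 0) • b 2 := by
  conv_lhs => rw [← b.sum_repr x, ← b.sum_repr y]
  simp only [Fin.sum_univ_three, add_lie, smul_lie, lie_add, lie_smul, lie_self, hb.lie_zero_one,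
    hb.lie_zero_two, hb.lie_one_two, hb.lie_one_zero, hb.lie_two_zero, hb.lie_two_one]
  module

theorem repr_lie_zero (hb : IsR3Basis b) (x y : M) : b.repr ⁅x, y⁆ 0 = 0 := by
  simp [hb.lie_eq]

theorem repr_lie_one (hb : IsR3Basis b) (x y : M) :
    b.repr ⁅x, y⁆ 1 = b.repr x 0 * b.repr y 1 - b.repr x 1 * b.repr y 0
        + b.repr x 0 * b.repr y 2 - b.repr x 2 * b.repr y 0 := by
  simp [hb.lie_eq]

theorem repr_lie_two (hb : IsR3Basis b) (x y : M) :
    b.repr ⁅x, y⁆ 2 = b.repr x 0 * b.repr y 2 - b.repr x 2 * b.repr y 0 := by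
  simp [hb.lie_eq]

end CommRing

section Field

variable {K M : Type*} [Field K] [LieRing M] [LieAlgebra K M] {b : Module.Basis (Fin 3) K M}

theorem exists_of_lieEquiv (hb : IsR3Basis b) (T : M ≃ₗ⁅K⁆ M) :
    ∃ α₁ α₂ α₃ α₄ : K, α₄ ≠ 0 ∧ T (b 0) = b 0 + α₁ • b 1 + α₂ • b 2 ∧
      T (b 1) = α₄ • b 1 ∧ T (b 2) = α₃ • b 1 + α₄ • b 2 := by
  obtain ⟨t, ht⟩ : ∃ t : Fin 3 → Fin 3 → K, ∀ i j, b.repr (T (b i)) j = t i j :=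
    ⟨_, fun _ _ => rfl⟩
  have e1 : T (b 1) = ⁅T (b 0), T (b 1)⁆ := by rw [← T.map_lie, hb.lie_zero_one]
  have e2 : T (b 1) + T (b 2) = ⁅T (b 0), T (b 2)⁆ := by
    rw [← T.map_lie, hb.lie_zero_two, map_add]
  have c1 (j : Fin 3) := congrArg (fun v => b.repr v j) e1
  have c2 (j : Fin 3) := congrArg (fun v => b.repr v j) e2
  have c10 := c1 0; have c11 := c1 1; have c12 := c1 2
  have c20 := c2 0; have c21 := c2 1
  simp only [hb.repr_lie_zero, hb.repr_lie_one, hb.repr_lie_two, map_add, Finsupp.add_apply,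
    ht] at c10 c11 c12 c20 c21
  have hT1 : T (b 1) = t 1 1 • b 1 + t 1 2 • b 2 :=
    b.ext_elem fun i => by fin_cases i <;> simp [ht, c10]
  have hT1_ne : t 1 1 ≠ 0 ∨ t 1 2 ≠ 0 := by
    by_contra! h
    exact b.ne_zero 1 (T.injective (by simp [hT1, h.1, h.2]))
  -- `T (b 1)` is an eigenvector of `ad (T (b 0))` for the eigenvalue `1`, while `ad (T (b 0))`
  -- acts on the derived algebra with the single eigenvalue `t 0 0`
  have ht00 : t 0 0 = 1 := by
    by_contra h
    have h' : t 0 0 - 1 ≠ 0 := sub_ne_zero.2 h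
    have ht12 : t 1 2 = 0 :=
      (mul_eq_zero.1 (by linear_combination -c12 + t 0 2 * c10)).resolve_left h'
    have ht11 : t 1 1 = 0 :=
      (mul_eq_zero.1 (by linear_combination -c11 - t 0 0 * ht12 + (t 0 1 + t 0 2) * c10 :
        (t 0 0 - 1) * t 1 1 = 0)).resolve_left h'
    exact hT1_ne.elim (· ht11) (· ht12)
  have ht12 : t 1 2 = 0 := by
    linear_combination -c11 - (t 1 1 + t 1 2) * ht00 + (t 0 1 + t 0 2) * c10
  have ht20 : t 2 0 = 0 := by linear_combination c20 - c10
  have ht22 : t 2 2 = t 1 1 := by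
    linear_combination -c21 - (t 2 1 + t 2 2) * ht00 + (t 0 1 + t 0 2) * ht20
  refine ⟨t 0 1, t 0 2, t 2 1, t 1 1, hT1_ne.resolve_right (not_not.2 ht12), ?_, ?_, ?_⟩
  all_goals
    exact b.ext_elem fun i => by fin_cases i <;> simp [ht, c10, ht00, ht12, ht20, ht22]

theorem exists_lieEquiv (hb : IsR3Basis b) (α₁ α₂ α₃ : K) {α₄ : K} (hα₄ : α₄ ≠ 0) :
    ∃ T : M ≃ₗ⁅K⁆ M, T (b 0) = b 0 + α₁ • b 1 + α₂ • b 2 ∧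
      T (b 1) = α₄ • b 1 ∧ T (b 2) = α₃ • b 1 + α₄ • b 2 := by
  let f : M →ₗ[K] M := b.constr K ![b 0 + α₁ • b 1 + α₂ • b 2, α₄ • b 1, α₃ • b 1 + α₄ • b 2]
  have hf (x : M) : f x = b.repr x 0 • b 0
      + (α₁ * b.repr x 0 + α₄ * b.repr x 1 + α₃ * b.repr x 2) • b 1
      + (α₂ * b.repr x 0 + α₄ * b.repr x 2) • b 2 := by
    conv_lhs => rw [← b.sum_repr x]
    simp only [f, Fin.sum_univ_three, map_add, map_smul, Module.Basis.constr_basis,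
      Matrix.cons_val_zero, Matrix.cons_val_one, Matrix.cons_val]
    module
  have hlie (x y : M) : f ⁅x, y⁆ = ⁅f x, f y⁆ := b.ext_elem fun i => by
    fin_cases i <;> simp [hf, hb.repr_lie_zero, hb.repr_lie_one, hb.repr_lie_two] <;> ring
  have hinj : Function.Injective f := by
    rw [injective_iff_map_eq_zero]
    intro x hx
    have h (i : Fin 3) := congrArg (fun v => b.repr v i) hx
    have h0 : b.repr x 0 = 0 := by simpa [hf] using h 0
    have h1 : α₁ * b.repr x 0 + α₄ * b.repr x 1 + α₃ * b.repr x 2 = 0 := by simpa [hf] using h 1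
    have h2 : α₂ * b.repr x 0 + α₄ * b.repr x 2 = 0 := by simpa [hf] using h 2
    have hx2 : b.repr x 2 = 0 :=
      (mul_eq_zero.1 (by linear_combination h2 - α₂ * h0)).resolve_left hα₄
    have hx1 : b.repr x 1 = 0 :=
      (mul_eq_zero.1 (by linear_combination h1 - α₁ * h0 - α₃ * hx2)).resolve_left hα₄
    exact b.ext_elem fun i => by fin_cases i <;> simp [h0, hx1, hx2]
  have := b.finiteDimensional_of_finite
  refine ⟨LieEquiv.ofBijective { f with map_lie' := hlie _ _ }
    ⟨hinj, LinearMap.injective_iff_surjective.1 hinj⟩, ?_, ?_, ?_⟩ <;>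
    exact b.constr_basis K _ _

theorem comp_toLin_diagonal_eq_iff (hb : IsR3Basis b) {T : M →ₗ[K] M} {α₁ α₂ α₃ α₄ : K}
    (hα₄ : α₄ ≠ 0) (hT0 : T (b 0) = b 0 + α₁ • b 1 + α₂ • b 2) (hT1 : T (b 1) = α₄ • b 1)
    (hT2 : T (b 2) = α₃ • b 1 + α₄ • b 2) (β₁ β₄ β₄' : K) (c : M) :
    T ∘ₗ Matrix.toLin b b (Matrix.diagonal ![β₁, β₄, β₄])
        = (Matrix.toLin b b (Matrix.diagonal ![β₁, β₄', β₄']) + LieAlgebra.ad K M c) ∘ₗ T ↔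
      β₄' = β₄ ∧ c = ((β₄ - β₁) * (α₁ - α₂)) • b 1 + ((β₄ - β₁) * α₂) • b 2 := by
  constructor
  · intro h
    obtain ⟨γ, hγ⟩ : ∃ γ : Fin 3 → K, ∀ i, b.repr c i = γ i := ⟨_, fun _ => rfl⟩
    have e (j i : Fin 3) := congrArg (fun v => b.repr v i) (LinearMap.congr_fun h (b j))
    have e01 : β₁ * α₁ = α₁ * β₄' + (-γ 1 - γ 2 + α₁ * γ 0 + α₂ * γ 0) := by
      simpa [-Matrix.toLin_self, Matrix.toLin_diagonal_self, hT0, hb.repr_lie_one, hγ] using e 0 1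
    have e02 : β₁ * α₂ = α₂ * β₄' + (-γ 2 + α₂ * γ 0) := by
      simpa [-Matrix.toLin_self, Matrix.toLin_diagonal_self, hT0, hb.repr_lie_two, hγ] using e 0 2
    have e11 : β₄ * α₄ = α₄ * β₄' + α₄ * γ 0 := by
      simpa [-Matrix.toLin_self, Matrix.toLin_diagonal_self, hT1, hb.repr_lie_one, hγ] using e 1 1
    have e21 : β₄ * α₃ = α₃ * β₄' + (α₃ * γ 0 + α₄ * γ 0) := by
      simpa [-Matrix.toLin_self, Matrix.toLin_diagonal_self, hT2, hb.repr_lie_one, hγ] using e 2 1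
    have hβ₄ : β₄ - β₄' - γ 0 = 0 := (mul_eq_zero.1
      (by linear_combination e11 : (β₄ - β₄' - γ 0) * α₄ = 0)).resolve_right hα₄
    have hγ0 : γ 0 = 0 := (mul_eq_zero.1
      (by linear_combination -e21 + α₃ * hβ₄ : γ 0 * α₄ = 0)).resolve_right hα₄
    have hγ1 : γ 1 = (β₄ - β₁) * (α₁ - α₂) := by
      linear_combination e01 - e02 + (α₂ - α₁) * hβ₄ + α₂ * hγ0
    have hγ2 : γ 2 = (β₄ - β₁) * α₂ := by linear_combination e02 - α₂ * hβ₄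
    refine ⟨by linear_combination -hβ₄ - hγ0, b.ext_elem fun i => ?_⟩
    fin_cases i <;> simp [hγ, hγ0, hγ1, hγ2]
  · rintro ⟨rfl, rfl⟩
    refine b.ext fun j => ?_
    fin_cases j <;>
      simp only [Fin.zero_eta, Fin.mk_one, Fin.reduceFinMk, LinearMap.comp_apply,
        LinearMap.add_apply, LinearMap.smul_apply, LieAlgebra.ad_apply,
        Matrix.toLin_diagonal_self, Matrix.cons_val_zero, Matrix.cons_val_one, Matrix.cons_val,
        hT0, hT1, hT2, map_add, map_smul, lie_self, hb.lie_one_two, hb.lie_one_zero,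
        hb.lie_two_zero, hb.lie_two_one] <;>
      module

end Field

end IsR3Basis

theorem affBracketF_eq_lieAffBracket (b : Module.Basis (Fin 3) ℂ L) (β₁ β₄ N₁ N₂ N₃ : ℂ) :
    affBracketF b β₁ β₄ N₁ N₂ N₃ = lieAffBracket (β₁ • LinearMap.id)
      (Matrix.toLin b b (Matrix.diagonal ![β₁, β₄, β₄])) (N₁ • b 0 + N₂ • b 1 + N₃ • b 2) := by
  ext x y
  refine b.ext_elem fun i => ?_
  fin_cases i <;>
    simp [affBracketF, lieAffBracket, Matrix.repr_toLin, Matrix.mulVec_diagonal] <;> ring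

/-- Isomorphism criterion for the Lie affgebras `F(β₁,β₄,N₁,N₂,N₃)` on `r₃`. -/
theorem stmt17 (b : Module.Basis (Fin 3) ℂ L)
    (h12 : ⁅b 0, b 1⁆ = b 1) (h13 : ⁅b 0, b 2⁆ = b 1 + b 2)
    (h23 : ⁅b 1, b 2⁆ = 0)
    (β₁ β₄ N₁ N₂ N₃ β₁' β₄' N₁' N₂' N₃' : ℂ) :
    IsLieAffgebraIso (affBracketF b β₁ β₄ N₁ N₂ N₃)
        (affBracketF b β₁' β₄' N₁' N₂' N₃') ↔
      β₁' = β₁ ∧ β₄' = β₄ ∧ N₁' = N₁ ∧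
      ∃ α₁ α₂ α₃ α₄ : ℂ, α₄ ≠ 0 ∧
        N₂' = α₁ * (N₁ - (β₁ - β₄) * (1 - β₁)) - α₂ * (β₄ - β₁) * (1 - β₁)
          + α₄ * N₂ + α₃ * N₃ ∧
        N₃' = α₂ * (N₁ - (β₁ - β₄) * (1 - β₁)) + α₄ * N₃ := by
  have hb : IsR3Basis b := ⟨h12, h13, h23⟩
  have : Nontrivial L := ⟨b 0, 0, b.ne_zero 0⟩
  rw [affBracketF_eq_lieAffBracket, affBracketF_eq_lieAffBracket,
    isLieAffgebraIso_lieAffBracket_iff]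
  constructor
  · rintro ⟨T, c, hg, hf, hs⟩
    obtain ⟨α₁, α₂, α₃, α₄, hα₄, hT0, hT1, hT2⟩ := hb.exists_of_lieEquiv T
    have hβ₁ : β₁' = β₁ := ((T.toLinearEquiv.comp_smul_id_eq_smul_id_comp_iff β₁ β₁').1 hg).symm
    subst β₁'
    obtain ⟨hβ₄, rfl⟩ := (hb.comp_toLin_diagonal_eq_iff hα₄ hT0 hT1 hT2 β₁ β₄ β₄' c).1 hf
    subst β₄'
    obtain ⟨hN₁, hN₂, hN₃⟩ :=
      (map_add_eq_smul_add_iff hT0 hT1 hT2 β₁ β₄ N₁ N₂ N₃ N₁' N₂' N₃').1 (by simpa using hs)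
    exact ⟨rfl, rfl, hN₁, α₁, α₂, α₃, α₄, hα₄, hN₂, hN₃⟩
  · rintro ⟨hβ₁, hβ₄, hN₁, α₁, α₂, α₃, α₄, hα₄, hN₂, hN₃⟩
    subst β₁' β₄' N₁'
    obtain ⟨T, hT0, hT1, hT2⟩ := hb.exists_lieEquiv α₁ α₂ α₃ hα₄
    exact ⟨T, _, (T.toLinearEquiv.comp_smul_id_eq_smul_id_comp_iff β₁ β₁).2 rfl,
      (hb.comp_toLin_diagonal_eq_iff hα₄ hT0 hT1 hT2 β₁ β₄ β₄ _).2 ⟨rfl, rfl⟩,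
      by simpa using
        (map_add_eq_smul_add_iff hT0 hT1 hT2 β₁ β₄ N₁ N₂ N₃ N₁ N₂' N₃').2 ⟨rfl, hN₂, hN₃⟩⟩
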